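/- arXiv:2311.17539 — 4 statements merged into one kernel-verified Lean document; each statement's English description precedes it below -/
import Mathlib

section
/- Suppose each f_i : ℝ^d → ℝ is β-smooth, f = (1/n)∑ f_i is λ-smooth and satisfies the α-PL condition, interpolation holds (f_i(x★)=0, ∇f_i(x★)=0 for all i), and 0 ≤ ρ ≤ 1/((β/α + 1/2)β). Then stochastic SAM with update x_{t+1} = x_t − η∇f_{i_t}(x_t + ρ∇f_{i_t}(x_t)), where i_t is uniform in {1,…,n} and step size η★ = (α − (β + α/2)βρ)/(2λβ(βρ+1)²), satisfies E[f(x_t)] ≤ (1 − ((α − (β + α/2)βρ)/2)·η★)^t · f(x_0) for all t ≥ 0, i.e., linear convergence. -/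
/-! The SAM direction `G = ∇f_i(x + ρ∇f_i(x))` differs from `g = ∇f_i(x)` by at most `βρ‖g‖`,
so the `λ`-descent lemma for `f` along `-ηG` costs, compared with plain SGD, at most
`ηβρ/2 (‖∇f(x)‖² + ‖g‖²)` in the cross term. Nonnegativity and `β`-smoothness give the
self-bound `‖∇f_i(x)‖² ≤ 2β f_i(x)`; averaging over `i` turns `⟪∇f(x), g⟫` into `‖∇f(x)‖²` and
`f_i` into `f`, and PL (with `f(x★) = 0` by interpolation) yields the one-step contraction
`E f(x⁺) ≤ (1 - cη + λβ(βρ+1)²η²) f(x)`, `c = α - (β + α/2)βρ`. Conditioning on the first `t`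
indices iterates it along the trajectory. -/

open scoped BigOperators

/-- Stochastic SAM trajectory: `x_{t+1} = x_t − η∇f_{i_t}(x_t + ρ∇f_{i_t}(x_t))`,
as a function of the sampled index sequence `ω : Fin t → Fin n`. -/
noncomputable def samTraj {n d : ℕ} (η ρ : ℝ)
    (fi : Fin n → EuclideanSpace ℝ (Fin d) → ℝ)
    (x0 : EuclideanSpace ℝ (Fin d)) :
    (t : ℕ) → (Fin t → Fin n) → EuclideanSpace ℝ (Fin d)
  | 0, _ => x0
  | t + 1, ω =>
      let x := samTraj η ρ fi x0 t (fun j => ω j.castSucc)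
      let i := ω (Fin.last t)
      x - η • gradient (fi i) (x + ρ • gradient (fi i) x)

open scoped Gradient RealInnerProductSpace

section Smooth

variable {E : Type*} [NormedAddCommGroup E] [InnerProductSpace ℝ E]

theorem inner_sub_le_inner_of_norm_sub_le {u g G : E} {κ : ℝ} (hκ : 0 ≤ κ)
    (hG : ‖G - g‖ ≤ κ * ‖g‖) :
    ⟪u, g⟫ - κ / 2 * (‖u‖ ^ 2 + ‖g‖ ^ 2) ≤ ⟪u, G⟫ := by
  have hsplit : ⟪u, G⟫ = ⟪u, g⟫ + ⟪u, G - g⟫ := by rw [← inner_add_right, add_sub_cancel]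
  have hcs : -(‖u‖ * ‖G - g‖) ≤ ⟪u, G - g⟫ := (abs_le.1 (abs_real_inner_le_norm u (G - g))).1
  -- AM-GM: `‖u‖ ‖g‖ ≤ (‖u‖² + ‖g‖²) / 2`
  nlinarith [mul_le_mul_of_nonneg_left hG (norm_nonneg u), sq_nonneg (‖u‖ - ‖g‖)]

variable [CompleteSpace E]

theorem apply_add_le_of_lipschitz_gradient {h : E → ℝ} {L : ℝ} (hd : Differentiable ℝ h)
    (hL : ∀ x y, ‖∇ h x - ∇ h y‖ ≤ L * ‖x - y‖) (x v : E) :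
    h (x + v) ≤ h x + ⟪∇ h x, v⟫ + L / 2 * ‖v‖ ^ 2 := by
  set φ : ℝ → ℝ := fun t => h (x + t • v) - t * ⟪∇ h x, v⟫ - L / 2 * t ^ 2 * ‖v‖ ^ 2
  set φ' : ℝ → ℝ := fun t => ⟪∇ h (x + t • v), v⟫ - ⟪∇ h x, v⟫ - L * t * ‖v‖ ^ 2
  have hφ : ∀ t, HasDerivAt φ (φ' t) t := by
    intro t
    have hline : HasDerivAt (fun t : ℝ => x + t • v) v t := by
      simpa using ((hasDerivAt_id t).smul_const v).const_add x
    have hh : HasDerivAt (fun s : ℝ => h (x + s • v)) ⟪∇ h (x + t • v), v⟫ t := by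
      rw [inner_gradient_left]
      exact (hd _).hasFDerivAt.comp_hasDerivAt t hline
    have hsub := (hh.sub ((hasDerivAt_id t).mul_const ⟪∇ h x, v⟫)).sub
      (((hasDerivAt_pow 2 t).const_mul (L / 2)).mul_const (‖v‖ ^ 2))
    exact hsub.congr_deriv (by simp only [φ']; push_cast; ring)
  have hφ'_nonpos : ∀ t ∈ interior (Set.Icc (0 : ℝ) 1), φ' t ≤ 0 := by
    intro t ht
    rw [interior_Icc] at ht
    have hgrad : ‖∇ h (x + t • v) - ∇ h x‖ ≤ L * t * ‖v‖ := by
      simpa [norm_smul, abs_of_pos ht.1, mul_assoc] using hL (x + t • v) x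
    calc φ' t = ⟪∇ h (x + t • v) - ∇ h x, v⟫ - L * t * ‖v‖ ^ 2 := by
          simp only [φ', inner_sub_left]
      _ ≤ ‖∇ h (x + t • v) - ∇ h x‖ * ‖v‖ - L * t * ‖v‖ ^ 2 := by
          gcongr; exact real_inner_le_norm _ _
      _ ≤ 0 := by linarith [mul_le_mul_of_nonneg_right hgrad (norm_nonneg v)]
  have hanti := antitoneOn_of_hasDerivWithinAt_nonpos (convex_Icc 0 1)
    (fun t _ => (hφ t).continuousAt.continuousWithinAt) (fun t _ => (hφ t).hasDerivWithinAt)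
    hφ'_nonpos
  have hφ01 := hanti (by simp) (by simp) zero_le_one
  simp only [φ, one_smul, zero_smul, add_zero] at hφ01
  linarith

theorem norm_sq_gradient_le_of_nonneg {h : E → ℝ} {L : ℝ} (hL0 : 0 < L) (hd : Differentiable ℝ h)
    (hL : ∀ x y, ‖∇ h x - ∇ h y‖ ≤ L * ‖x - y‖) (hnn : ∀ x, 0 ≤ h x) (x : E) :
    ‖∇ h x‖ ^ 2 ≤ 2 * L * h x := by
  have hdesc := apply_add_le_of_lipschitz_gradient hd hL x (-(L⁻¹ • ∇ h x))
  rw [inner_neg_right, real_inner_smul_right, real_inner_self_eq_norm_sq, norm_neg, norm_smul,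
    mul_pow, Real.norm_of_nonneg (inv_nonneg.2 hL0.le)] at hdesc
  have hval : L⁻¹ * ‖∇ h x‖ ^ 2 - L / 2 * (L⁻¹ ^ 2 * ‖∇ h x‖ ^ 2) = ‖∇ h x‖ ^ 2 / (2 * L) := by
    field_simp
    ring
  have hle : ‖∇ h x‖ ^ 2 / (2 * L) ≤ h x := by linarith [hnn (x + -(L⁻¹ • ∇ h x))]
  rwa [div_le_iff₀ (by positivity), mul_comm] at hle

theorem norm_gradient_ascent_sub_le {h : E → ℝ} {L ρ : ℝ} (hρ : 0 ≤ ρ)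
    (hL : ∀ x y, ‖∇ h x - ∇ h y‖ ≤ L * ‖x - y‖) (x : E) :
    ‖∇ h (x + ρ • ∇ h x) - ∇ h x‖ ≤ L * ρ * ‖∇ h x‖ := by
  simpa [norm_smul, Real.norm_of_nonneg hρ, mul_assoc] using hL (x + ρ • ∇ h x) x

theorem apply_sub_smul_le_of_norm_sub_le {f : E → ℝ} {L κ η : ℝ} (hL0 : 0 ≤ L) (hκ : 0 ≤ κ)
    (hη : 0 ≤ η) (hd : Differentiable ℝ f) (hL : ∀ x y, ‖∇ f x - ∇ f y‖ ≤ L * ‖x - y‖)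
    {x g G : E} (hG : ‖G - g‖ ≤ κ * ‖g‖) :
    f (x - η • G) ≤ f x - η * ⟪∇ f x, g⟫ + η * κ / 2 * ‖∇ f x‖ ^ 2
      + (η * κ / 2 + L / 2 * η ^ 2 * (κ + 1) ^ 2) * ‖g‖ ^ 2 := by
  have hdesc := apply_add_le_of_lipschitz_gradient hd hL x (-(η • G))
  rw [← sub_eq_add_neg, inner_neg_right, real_inner_smul_right, norm_neg, norm_smul, mul_pow,
    Real.norm_of_nonneg hη] at hdesc
  have hnorm : ‖G‖ ≤ (κ + 1) * ‖g‖ := by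
    linarith [norm_le_norm_add_norm_sub' G g]
  have hnorm_sq : ‖G‖ ^ 2 ≤ (κ + 1) ^ 2 * ‖g‖ ^ 2 := by
    rw [← mul_pow]; gcongr
  have hinner := inner_sub_le_inner_of_norm_sub_le (u := ∇ f x) hκ hG
  linarith [mul_le_mul_of_nonneg_left hinner hη,
    mul_le_mul_of_nonneg_left hnorm_sq (by positivity : 0 ≤ L / 2 * η ^ 2)]

theorem gradient_const_mul_sum {ι : Type*} (s : Finset ι) (c : ℝ) {F : ι → E → ℝ} {x : E}
    (hF : ∀ i ∈ s, DifferentiableAt ℝ (F i) x) :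
    ∇ (fun y => c * ∑ i ∈ s, F i y) x = c • ∑ i ∈ s, ∇ (F i) x := by
  refine HasGradientAt.gradient (hasGradientAt_iff_hasFDerivAt.2 ?_)
  rw [map_smul, map_sum]
  exact (HasFDerivAt.fun_sum fun i hi => (hF i hi).hasGradientAt.hasFDerivAt).const_mul c

end Smooth

section SamStep

variable {E : Type*} [NormedAddCommGroup E] [InnerProductSpace ℝ E] [CompleteSpace E]

noncomputable def samStep (η ρ : ℝ) (h : E → ℝ) (x : E) : E :=
  x - η • ∇ h (x + ρ • ∇ h x)

theorem mean_apply_samStep_le {n : ℕ} (hn : 0 < n) {β L α ρ η : ℝ} (hβ : 0 < β) (hL0 : 0 ≤ L)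
    (hρ : 0 ≤ ρ) (hβρ : β * ρ ≤ 2) (hη : 0 ≤ η) {fi : Fin n → E → ℝ} {f : E → ℝ}
    (hf : ∀ x, f x = (n : ℝ)⁻¹ * ∑ i, fi i x) (hdi : ∀ i, Differentiable ℝ (fi i))
    (hd : Differentiable ℝ f) (hnn : ∀ i x, 0 ≤ fi i x)
    (hβi : ∀ i x y, ‖∇ (fi i) x - ∇ (fi i) y‖ ≤ β * ‖x - y‖)
    (hL : ∀ x y, ‖∇ f x - ∇ f y‖ ≤ L * ‖x - y‖) (hPL : ∀ x, α * f x ≤ ‖∇ f x‖ ^ 2) (x : E) :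
    (n : ℝ)⁻¹ * ∑ i, f (samStep η ρ (fi i) x)
      ≤ (1 - (α - (β + α / 2) * β * ρ) * η + L * β * (β * ρ + 1) ^ 2 * η ^ 2) * f x := by
  set N := ‖∇ f x‖ ^ 2 with hN
  set B := η * (β * ρ) / 2 + L / 2 * η ^ 2 * (β * ρ + 1) ^ 2 with hB_def
  have hB : 0 ≤ B := by positivity
  have hgrad : ∇ f x = (n : ℝ)⁻¹ • ∑ i, ∇ (fi i) x := by
    rw [show f = fun y => (n : ℝ)⁻¹ * ∑ i, fi i y from funext hf]
    exact gradient_const_mul_sum _ _ fun i _ => (hdi i).differentiableAt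
  have hstep : ∀ i, f (samStep η ρ (fi i) x)
      ≤ f x + η * (β * ρ) / 2 * N - η * ⟪∇ f x, ∇ (fi i) x⟫ + B * (2 * β) * fi i x := by
    intro i
    have hdesc := apply_sub_smul_le_of_norm_sub_le hL0 (by positivity) hη hd hL (x := x)
      (norm_gradient_ascent_sub_le hρ (hβi i) x)
    have hg := norm_sq_gradient_le_of_nonneg hβ (hdi i) (hβi i) (hnn i) x
    rw [← hN, ← hB_def] at hdesc
    unfold samStep
    linarith [mul_le_mul_of_nonneg_left hg hB]
  have hn' : (n : ℝ) ≠ 0 := by positivity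
  have hsum_f : ∑ i, fi i x = n * f x := by rw [hf x, mul_inv_cancel_left₀ hn']
  have hsum_inner : ∑ i, ⟪∇ f x, ∇ (fi i) x⟫ = n * N := by
    rw [← inner_sum, ← smul_inv_smul₀ hn' (∑ i, ∇ (fi i) x), ← hgrad, real_inner_smul_right,
      real_inner_self_eq_norm_sq]
  have hmean : (n : ℝ)⁻¹ * ∑ i, (f x + η * (β * ρ) / 2 * N - η * ⟪∇ f x, ∇ (fi i) x⟫
      + B * (2 * β) * fi i x) = f x + η * (β * ρ) / 2 * N - η * N + B * (2 * β) * f x := by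
    simp only [Finset.sum_add_distrib, Finset.sum_sub_distrib, Finset.sum_const, Finset.card_univ,
      Fintype.card_fin, nsmul_eq_mul, ← Finset.mul_sum, hsum_inner, hsum_f]
    field_simp
  have hcoef : 0 ≤ η * (1 - β * ρ / 2) := mul_nonneg hη (by linarith)
  calc (n : ℝ)⁻¹ * ∑ i, f (samStep η ρ (fi i) x)
      ≤ (n : ℝ)⁻¹ * ∑ i, (f x + η * (β * ρ) / 2 * N - η * ⟪∇ f x, ∇ (fi i) x⟫
          + B * (2 * β) * fi i x) := by
        gcongr with i
        exact hstep i
    _ = f x - η * (1 - β * ρ / 2) * N + B * (2 * β) * f x := by rw [hmean]; ring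
    _ ≤ _ := by
        rw [hB_def]
        linarith [mul_le_mul_of_nonneg_left (hPL x : α * f x ≤ N) hcoef]

end SamStep

section SamTraj

variable {n d : ℕ} {η ρ : ℝ} {fi : Fin n → EuclideanSpace ℝ (Fin d) → ℝ}
  {x0 : EuclideanSpace ℝ (Fin d)}

theorem samTraj_succ_snoc (t : ℕ) (ω : Fin t → Fin n) (i : Fin n) :
    samTraj η ρ fi x0 (t + 1) (Fin.snoc ω i) = samStep η ρ (fi i) (samTraj η ρ fi x0 t ω) := by
  simp only [samTraj, samStep, Fin.snoc_castSucc, Fin.snoc_last]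

theorem sum_samTraj_succ (F : EuclideanSpace ℝ (Fin d) → ℝ) (t : ℕ) :
    ∑ ω, F (samTraj η ρ fi x0 (t + 1) ω)
      = ∑ ω, ∑ i, F (samStep η ρ (fi i) (samTraj η ρ fi x0 t ω)) := by
  rw [Finset.sum_comm, ← Fintype.sum_prod_type']
  refine (Fintype.sum_equiv (Fin.snocEquiv fun _ => Fin n) _ _ fun p => ?_).symm
  rw [← samTraj_succ_snoc]
  rfl

theorem mean_samTraj_le_of_mean_samStep_le {q : ℝ} {F : EuclideanSpace ℝ (Fin d) → ℝ}
    (hq : 0 ≤ q) (hstep : ∀ x, (n : ℝ)⁻¹ * ∑ i, F (samStep η ρ (fi i) x) ≤ q * F x) (t : ℕ) :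
    ((n : ℝ) ^ t)⁻¹ * ∑ ω, F (samTraj η ρ fi x0 t ω) ≤ q ^ t * F x0 := by
  induction t with
  | zero => simp [samTraj]
  | succ t ih =>
    calc ((n : ℝ) ^ (t + 1))⁻¹ * ∑ ω, F (samTraj η ρ fi x0 (t + 1) ω)
        ≤ ((n : ℝ) ^ t)⁻¹ * ∑ ω, q * F (samTraj η ρ fi x0 t ω) := by
          rw [sum_samTraj_succ, pow_succ, mul_inv, mul_assoc, Finset.mul_sum]
          exact mul_le_mul_of_nonneg_left (Finset.sum_le_sum fun ω _ => hstep _) (by positivity)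
      _ ≤ q ^ (t + 1) * F x0 := by
          rw [← Finset.mul_sum, mul_left_comm, pow_succ', mul_assoc]
          gcongr

theorem mean_samTraj_le_of_nonneg {q : ℝ} {F : EuclideanSpace ℝ (Fin d) → ℝ}
    (hF : ∀ x, 0 ≤ F x) (hstep : ∀ x, (n : ℝ)⁻¹ * ∑ i, F (samStep η ρ (fi i) x) ≤ q * F x)
    (t : ℕ) : ((n : ℝ) ^ t)⁻¹ * ∑ ω, F (samTraj η ρ fi x0 t ω) ≤ q ^ t * F x0 := by
  rcases le_or_gt 0 q with hq | hq
  · exact mean_samTraj_le_of_mean_samStep_le hq hstep t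
  -- a negative contraction factor forces the nonnegative `F` to vanish
  have hF0 : ∀ x, F x = 0 := fun x => by
    have hmean : 0 ≤ (n : ℝ)⁻¹ * ∑ i, F (samStep η ρ (fi i) x) :=
      mul_nonneg (by positivity) (Finset.sum_nonneg fun i _ => hF _)
    nlinarith [hstep x, hF x]
  simp [hF0]

end SamTraj

/-- Linear convergence of stochastic SAM under β-smoothness of each `f_i`,
λ-smoothness and α-PL of `f`, and interpolation, for
`ρ ≤ 1/((β/α + 1/2)β)` and step size `η★ = (α − (β + α/2)βρ)/(2λβ(βρ+1)²)`:
`E[f(x_t)] ≤ (1 − ((α − (β + α/2)βρ)/2)η★)ᵗ f(x_0)`. -/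
theorem stochastic_sam_linear_convergence
    {n d : ℕ} (hn : 0 < n) (β lam α ρ : ℝ)
    (hβ : 0 < β) (hlam : 0 < lam) (hα : 0 < α)
    (hρ0 : 0 ≤ ρ) (hρ : ρ ≤ 1 / ((β / α + 1 / 2) * β))
    (fi : Fin n → EuclideanSpace ℝ (Fin d) → ℝ)
    (f : EuclideanSpace ℝ (Fin d) → ℝ)
    (hfdef : ∀ x, f x = (n : ℝ)⁻¹ * ∑ i, fi i x)
    (hdiff : ∀ i, Differentiable ℝ (fi i)) (hfdiff : Differentiable ℝ f)
    (hnonneg : ∀ i x, 0 ≤ fi i x)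
    (hβsmooth : ∀ i x y, ‖gradient (fi i) x - gradient (fi i) y‖ ≤ β * ‖x - y‖)
    (hlamsmooth : ∀ x y, ‖gradient f x - gradient f y‖ ≤ lam * ‖x - y‖)
    (xstar : EuclideanSpace ℝ (Fin d))
    (hPL : ∀ x, α * (f x - f xstar) ≤ ‖gradient f x‖ ^ 2)
    (hinterp : ∀ i, fi i xstar = 0 ∧ gradient (fi i) xstar = 0)
    (x0 : EuclideanSpace ℝ (Fin d)) :
    ∀ t : ℕ,
      ((n : ℝ) ^ t)⁻¹ *
          ∑ ω : Fin t → Fin n,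
            f (samTraj ((α - (β + α / 2) * β * ρ) / (2 * lam * β * (β * ρ + 1) ^ 2)) ρ
                fi x0 t ω)
        ≤ (1 - (α - (β + α / 2) * β * ρ) / 2 *
              ((α - (β + α / 2) * β * ρ) / (2 * lam * β * (β * ρ + 1) ^ 2))) ^ t * f x0 := by
  have hρα : (β + α / 2) * β * ρ ≤ α := by
    rw [show 1 / ((β / α + 1 / 2) * β) = α / ((β + α / 2) * β) by field_simp,
      le_div_iff₀ (by positivity)] at hρ
    linarith
  have hβρ : β * ρ ≤ 2 := by nlinarith [mul_nonneg (mul_nonneg hβ.le hβ.le) hρ0]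
  have hη : 0 ≤ (α - (β + α / 2) * β * ρ) / (2 * lam * β * (β * ρ + 1) ^ 2) :=
    div_nonneg (by linarith) (by positivity)
  have hfstar : f xstar = 0 := by simp [hfdef, hinterp]
  have hf_nonneg : ∀ x, 0 ≤ f x := fun x => by
    rw [hfdef]
    exact mul_nonneg (by positivity) (Finset.sum_nonneg fun i _ => hnonneg i x)
  refine mean_samTraj_le_of_nonneg hf_nonneg fun x => ?_
  -- the step size minimises the quadratic `1 - c η + lam β (βρ + 1)² η²` from the one-step bound
  refine (mean_apply_samStep_le hn hβ hlam.le hρ0 hβρ hη hfdef hdiff hfdiff hnonneg hβsmooth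
    hlamsmooth (fun x => by simpa [hfstar] using hPL x) x).trans_eq ?_
  congr 1
  field_simp
  ring
end

section
/- For η > 0, ρ ≥ 0, and symmetric positive semidefinite matrices H and H_ξ (a random symmetric PSD matrix with E[H_ξ] = H), the conditional second moment of the linearized stochastic SAM iterate x_{t+1} = x_t − ηH_ξ(x_t + ρH_ξ x_t) satisfies E[‖x_{t+1}‖² | x_t] = x_tᵀ((I − ηH − ηρH²)² + η(η−2ρ)(E[H_ξ²] − H²) + 2η²ρ(E[H_ξ³] − H³) + η²ρ²(E[H_ξ⁴] − H⁴))x_t. -/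
open Matrix

/-!
Write `B_ξ = I − ηH_ξ − ηρH_ξ²`, so that `x_{t+1} = B_ξ x_t` and, `B_ξ` being symmetric,
`‖x_{t+1}‖² = x_tᵀ B_ξ² x_t`. Now `B_ξ²` is a polynomial of degree 4 in `H_ξ`, so its mean is
that polynomial with `H_ξ^k` replaced by `E[H_ξ^k]`; subtracting the same polynomial evaluated
at `H = E[H_ξ]` leaves only the gaps `E[H_ξ^k] − H^k` for `k ≥ 2`.
-/

theorem Matrix.IsSymm.mulVec_dotProduct_mulVec {n α : Type*} [Fintype n] [DecidableEq n]
    [CommSemiring α] {A : Matrix n n α} (hA : A.IsSymm) (x y : n → α) :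
    A *ᵥ x ⬝ᵥ A *ᵥ y = x ⬝ᵥ (A ^ 2) *ᵥ y := by
  rw [sq, ← mulVec_mulVec, dotProduct_mulVec x, ← mulVec_transpose, hA.eq]

section SAM

variable {R A : Type*} [CommRing R] [Ring A] [Algebra R A]

def samMatrix (η ρ : R) (M : A) : A := 1 - η • M - (η * ρ) • M ^ 2

theorem samMatrix_sq (η ρ : R) (M : A) :
    samMatrix η ρ M ^ 2 = 1 - (2 * η) • M + (η * (η - 2 * ρ)) • M ^ 2
      + (2 * η ^ 2 * ρ) • M ^ 3 + (η ^ 2 * ρ ^ 2) • M ^ 4 := by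
  simp only [samMatrix, pow_succ, pow_zero, one_mul, mul_one, mul_sub, sub_mul, smul_mul_assoc,
    mul_smul_comm, ← mul_assoc]
  module

theorem sum_smul_samMatrix_sq {ι : Type*} [Fintype ι] (η ρ : R) {w : ι → R}
    (hw : ∑ i, w i = 1) (M : ι → A) :
    ∑ i, w i • samMatrix η ρ (M i) ^ 2
      = samMatrix η ρ (∑ i, w i • M i) ^ 2
        + (η * (η - 2 * ρ)) • (∑ i, w i • M i ^ 2 - (∑ i, w i • M i) ^ 2)
        + (2 * η ^ 2 * ρ) • (∑ i, w i • M i ^ 3 - (∑ i, w i • M i) ^ 3)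
        + (η ^ 2 * ρ ^ 2) • (∑ i, w i • M i ^ 4 - (∑ i, w i • M i) ^ 4) := by
  have hone : ∑ i, w i • (1 : A) = 1 := by rw [← Finset.sum_smul, hw, one_smul]
  simp only [samMatrix_sq, smul_add, smul_sub, Finset.sum_add_distrib, Finset.sum_sub_distrib,
    hone, smul_comm (w _) (_ : R), ← Finset.smul_sum]
  module

theorem Matrix.IsSymm.samMatrix {n : Type*} [Fintype n] [DecidableEq n] (η ρ : R)
    {M : Matrix n n R} (hM : M.IsSymm) : (samMatrix η ρ M).IsSymm :=
  (isSymm_one.sub (hM.smul η)).sub ((hM.pow 2).smul (η * ρ))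

theorem samMatrix_mulVec {n : Type*} [Fintype n] [DecidableEq n] (η ρ : R) (M : Matrix n n R)
    (x : n → R) : samMatrix η ρ M *ᵥ x = x - η • M *ᵥ (x + ρ • M *ᵥ x) := by
  simp only [samMatrix, sub_mulVec, one_mulVec, smul_mulVec, mulVec_add, mulVec_smul, sq,
    ← mulVec_mulVec]
  module

end SAM

theorem linearized_sam_second_moment_general
    {d m : ℕ} (hm : 0 < m) (η ρ : ℝ)
    (Hs : Fin m → Matrix (Fin d) (Fin d) ℝ)
    (hsym : ∀ j, (Hs j).IsSymm)
    (H : Matrix (Fin d) (Fin d) ℝ)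
    (hmean : H = (m : ℝ)⁻¹ • ∑ j, Hs j)
    (x : Fin d → ℝ) :
    (m : ℝ)⁻¹ *
        ∑ j, (x - η • (Hs j).mulVec (x + ρ • (Hs j).mulVec x)) ⬝ᵥ
              (x - η • (Hs j).mulVec (x + ρ • (Hs j).mulVec x))
      = x ⬝ᵥ ((((1 : Matrix (Fin d) (Fin d) ℝ) - η • H - (η * ρ) • H ^ 2) ^ 2
          + (η * (η - 2 * ρ)) • ((m : ℝ)⁻¹ • ∑ j, (Hs j) ^ 2 - H ^ 2)
          + (2 * η ^ 2 * ρ) • ((m : ℝ)⁻¹ • ∑ j, (Hs j) ^ 3 - H ^ 3)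
          + (η ^ 2 * ρ ^ 2) • ((m : ℝ)⁻¹ • ∑ j, (Hs j) ^ 4 - H ^ 4)).mulVec x) := by
  have hw : ∑ _j : Fin m, (m : ℝ)⁻¹ = 1 := by simp [hm.ne']
  rw [Finset.smul_sum] at hmean
  simp only [Finset.smul_sum]
  calc _ = ∑ j, (m : ℝ)⁻¹ * x ⬝ᵥ samMatrix η ρ (Hs j) ^ 2 *ᵥ x := by
        simp only [← samMatrix_mulVec, ((hsym _).samMatrix η ρ).mulVec_dotProduct_mulVec,
          Finset.mul_sum]
    _ = x ⬝ᵥ (∑ j, (m : ℝ)⁻¹ • samMatrix η ρ (Hs j) ^ 2) *ᵥ x := by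
        simp only [sum_mulVec, dotProduct_sum, smul_mulVec, dotProduct_smul, smul_eq_mul]
    _ = _ := by rw [sum_smul_samMatrix_sq η ρ hw, ← hmean, samMatrix]

/-- One-step conditional second-moment identity for linearized stochastic SAM:
with `H_ξ` a uniformly distributed random symmetric PSD matrix (over `m` outcomes)
with mean `H`, and update `x_{t+1} = x_t − ηH_ξ(x_t + ρH_ξ x_t)`,
`E[‖x_{t+1}‖² | x_t] = x_tᵀ((I − ηH − ηρH²)² + η(η−2ρ)(E[H_ξ²] − H²)
  + 2η²ρ(E[H_ξ³] − H³) + η²ρ²(E[H_ξ⁴] − H⁴))x_t`. -/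
theorem linearized_sam_second_moment
    {d m : ℕ} (hm : 0 < m) (η ρ : ℝ) (hη : 0 < η) (hρ : 0 ≤ ρ)
    (Hs : Fin m → Matrix (Fin d) (Fin d) ℝ)
    (hsym : ∀ j, (Hs j).IsSymm) (hpsd : ∀ j, (Hs j).PosSemidef)
    (H : Matrix (Fin d) (Fin d) ℝ)
    (hmean : H = (m : ℝ)⁻¹ • ∑ j, Hs j)
    (x : Fin d → ℝ) :
    (m : ℝ)⁻¹ *
        ∑ j, (x - η • (Hs j).mulVec (x + ρ • (Hs j).mulVec x)) ⬝ᵥ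
              (x - η • (Hs j).mulVec (x + ρ • (Hs j).mulVec x))
      = x ⬝ᵥ ((((1 : Matrix (Fin d) (Fin d) ℝ) - η • H - (η * ρ) • H ^ 2) ^ 2
          + (η * (η - 2 * ρ)) • ((m : ℝ)⁻¹ • ∑ j, (Hs j) ^ 2 - H ^ 2)
          + (2 * η ^ 2 * ρ) • ((m : ℝ)⁻¹ • ∑ j, (Hs j) ^ 3 - H ^ 3)
          + (η ^ 2 * ρ ^ 2) • ((m : ℝ)⁻¹ • ∑ j, (Hs j) ^ 4 - H ^ 4)).mulVec x) :=
  linearized_sam_second_moment_general hm η ρ Hs hsym H hmean x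
end

section
/- Linear stability criterion for stochastic SAM: with the linearized stochastic SAM dynamics x_{t+1} = (I − ηH_{ξ_t} − ηρH_{ξ_t}²)x_t where H_{ξ_t} are i.i.d. random symmetric matrices with mean H and moments M_k = E[H_ξ^k], if λ_max((I − ηH − ηρH²)² + η(η−2ρ)(M_2 − H²) + 2η²ρ(M_3 − H³) + η²ρ²(M_4 − H⁴)) ≤ 1, then E[‖x_t‖²] ≤ ‖x_0‖² for all t ≥ 0 (so x★ = 0 is linearly stable). -/
/-!
Each SAM step matrix `A_ξ = I - ηH_ξ - ηρH_ξ²` is symmetric, so `E‖A_ξ x‖² = xᵀ E[A_ξ²] x`.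
Expanding `A_ξ²` as a polynomial in `H_ξ` and recentring its moments at `H` shows that `E[A_ξ²]`
is exactly the matrix in the hypothesis, hence `E[‖x_{t+1}‖² | x_t] ≤ ‖x_t‖²`. Averaging over the
`m ^ t` equally likely histories and inducting on `t` gives the bound.
-/

open scoped BigOperators
open Matrix

/-- Trajectory of a random iteration driven by an i.i.d. sequence of outcomes. -/
def randTraj {Ω X : Type*} (step : Ω → X → X) (x0 : X) :
    (t : ℕ) → (Fin t → Ω) → X
  | 0, _ => x0
  | t + 1, ω => step (ω (Fin.last t)) (randTraj step x0 t (fun j => ω j.castSucc))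

section RandomIteration

variable {Ω X : Type*} [Fintype Ω] (step : Ω → X → X) (x0 : X)

theorem sum_randTraj_succ {M : Type*} [AddCommMonoid M] (g : X → M) (t : ℕ) :
    ∑ ω : Fin (t + 1) → Ω, g (randTraj step x0 (t + 1) ω)
      = ∑ ω : Fin t → Ω, ∑ j, g (step j (randTraj step x0 t ω)) := by
  rw [← (Fin.snocEquiv fun _ => Ω).sum_comp, Fintype.sum_prod_type_right]
  simp [Fin.snocEquiv, randTraj]

theorem sum_randTraj_le_pow_mul {V : X → ℝ} {c : ℝ} (hc : 0 ≤ c)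
    (hV : ∀ x, ∑ j, V (step j x) ≤ c * V x) (t : ℕ) :
    ∑ ω : Fin t → Ω, V (randTraj step x0 t ω) ≤ c ^ t * V x0 := by
  induction t with
  | zero => simp [randTraj]
  | succ t ih =>
    calc ∑ ω : Fin (t + 1) → Ω, V (randTraj step x0 (t + 1) ω)
        = ∑ ω : Fin t → Ω, ∑ j, V (step j (randTraj step x0 t ω)) := sum_randTraj_succ ..
      _ ≤ c * ∑ ω : Fin t → Ω, V (randTraj step x0 t ω) := by
        rw [Finset.mul_sum]
        exact Finset.sum_le_sum fun ω _ => hV _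
      _ ≤ c * (c ^ t * V x0) := mul_le_mul_of_nonneg_left ih hc
      _ = c ^ (t + 1) * V x0 := by ring

end RandomIteration

theorem natCast_card_smul_inv_smul_sum {ι 𝕜 M : Type*} [Fintype ι] [DivisionRing 𝕜] [CharZero 𝕜]
    [AddCommMonoid M] [Module 𝕜 M] (f : ι → M) :
    (Fintype.card ι : 𝕜) • ((Fintype.card ι : 𝕜)⁻¹ • ∑ i, f i) = ∑ i, f i := by
  cases isEmpty_or_nonempty ι
  · simp
  · rw [smul_smul, mul_inv_cancel₀ (Nat.cast_ne_zero.2 Fintype.card_ne_zero), one_smul]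

section SAM

variable {n : Type*} [Fintype n] [DecidableEq n]

theorem sq_one_sub_smul_sub_smul_sq {R : Type*} [CommRing R] (a b : R) (B : Matrix n n R) :
    (1 - a • B - b • B ^ 2) ^ 2
      = 1 - (2 * a) • B + (a ^ 2 - 2 * b) • B ^ 2 + (2 * a * b) • B ^ 3 + b ^ 2 • B ^ 4 := by
  simp only [pow_succ, pow_zero, sub_mul, mul_sub, one_mul, mul_one, smul_mul_assoc,
    mul_smul_comm, mul_assoc]
  module

theorem sum_sq_sam_step {ι 𝕜 : Type*} [Fintype ι] [Field 𝕜] [CharZero 𝕜] (η ρ : 𝕜)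
    (B : ι → Matrix n n 𝕜) (H : Matrix n n 𝕜)
    (hmean : H = (Fintype.card ι : 𝕜)⁻¹ • ∑ j, B j) :
    ∑ j, (1 - η • B j - (η * ρ) • B j ^ 2) ^ 2
      = (Fintype.card ι : 𝕜) •
          ((1 - η • H - (η * ρ) • H ^ 2) ^ 2
            + (η * (η - 2 * ρ)) • ((Fintype.card ι : 𝕜)⁻¹ • ∑ j, B j ^ 2 - H ^ 2)
            + (2 * η ^ 2 * ρ) • ((Fintype.card ι : 𝕜)⁻¹ • ∑ j, B j ^ 3 - H ^ 3)
            + (η ^ 2 * ρ ^ 2) • ((Fintype.card ι : 𝕜)⁻¹ • ∑ j, B j ^ 4 - H ^ 4)) := by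
  have hsum : ∑ j, B j = (Fintype.card ι : 𝕜) • H := by
    rw [hmean, natCast_card_smul_inv_smul_sum]
  have hmoment (k : ℕ) := natCast_card_smul_inv_smul_sum (𝕜 := 𝕜) fun j => B j ^ k
  simp only [sq_one_sub_smul_sub_smul_sq, Finset.sum_add_distrib, Finset.sum_sub_distrib,
    ← Finset.smul_sum, hsum, Finset.sum_const, Finset.card_univ]
  linear_combination (norm := module)
    -(η * (η - 2 * ρ)) • hmoment 2 - (2 * η ^ 2 * ρ) • hmoment 3 - (η ^ 2 * ρ ^ 2) • hmoment 4

theorem Matrix.IsSymm.one_sub_smul_sub_smul_sq {R : Type*} [CommRing R] {B : Matrix n n R}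
    (hB : B.IsSymm) (a b : R) : (1 - a • B - b • B ^ 2).IsSymm :=
  (isSymm_one.sub (hB.smul a)).sub ((hB.pow 2).smul b)

theorem dotProduct_sq_mulVec_of_isSymm {R : Type*} [CommRing R] {A : Matrix n n R}
    (hA : A.IsSymm) (x : n → R) : x ⬝ᵥ (A ^ 2 *ᵥ x) = A *ᵥ x ⬝ᵥ A *ᵥ x := by
  rw [sq, ← mulVec_mulVec, dotProduct_mulVec, ← mulVec_transpose, hA.eq]

theorem sum_dotProduct_mulVec_self_le {ι : Type*} [Fintype ι] (A : ι → Matrix n n ℝ)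
    (hA : ∀ j, (A j).IsSymm) {N : ℝ} (hN : 0 ≤ N) (S : Matrix n n ℝ) (hS : ∑ j, A j ^ 2 = N • S)
    (hSle : ∀ v, v ⬝ᵥ S *ᵥ v ≤ v ⬝ᵥ v) (x : n → ℝ) :
    ∑ j, A j *ᵥ x ⬝ᵥ A j *ᵥ x ≤ N * (x ⬝ᵥ x) :=
  calc ∑ j, A j *ᵥ x ⬝ᵥ A j *ᵥ x = x ⬝ᵥ (∑ j, A j ^ 2) *ᵥ x := by
        simp only [sum_mulVec, dotProduct_sum, dotProduct_sq_mulVec_of_isSymm (hA _)]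
    _ = N * (x ⬝ᵥ S *ᵥ x) := by rw [hS, smul_mulVec, dotProduct_smul, smul_eq_mul]
    _ ≤ N * (x ⬝ᵥ x) := mul_le_mul_of_nonneg_left (hSle x) hN

end SAM

theorem sam_linear_stability_general
    {d m : ℕ} (η ρ : ℝ)
    (Hs : Fin m → Matrix (Fin d) (Fin d) ℝ)
    (hsym : ∀ j, (Hs j).IsSymm)
    (H : Matrix (Fin d) (Fin d) ℝ)
    (hmean : H = (m : ℝ)⁻¹ • ∑ j, Hs j)
    (hstab : ∀ v : Fin d → ℝ,
      v ⬝ᵥ ((((1 : Matrix (Fin d) (Fin d) ℝ) - η • H - (η * ρ) • H ^ 2) ^ 2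
          + (η * (η - 2 * ρ)) • ((m : ℝ)⁻¹ • ∑ j, (Hs j) ^ 2 - H ^ 2)
          + (2 * η ^ 2 * ρ) • ((m : ℝ)⁻¹ • ∑ j, (Hs j) ^ 3 - H ^ 3)
          + (η ^ 2 * ρ ^ 2) • ((m : ℝ)⁻¹ • ∑ j, (Hs j) ^ 4 - H ^ 4)).mulVec v)
        ≤ v ⬝ᵥ v)
    (x0 : Fin d → ℝ) :
    ∀ t : ℕ,
      ((m : ℝ) ^ t)⁻¹ *
          ∑ ω : Fin t → Fin m,
            (randTraj (fun j x =>
                (((1 : Matrix (Fin d) (Fin d) ℝ) - η • Hs j - (η * ρ) • (Hs j) ^ 2)).mulVec x)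
              x0 t ω) ⬝ᵥ
            (randTraj (fun j x =>
                (((1 : Matrix (Fin d) (Fin d) ℝ) - η • Hs j - (η * ρ) • (Hs j) ^ 2)).mulVec x)
              x0 t ω)
        ≤ x0 ⬝ᵥ x0 := by
  intro t
  have hsq := sum_sq_sam_step η ρ Hs H (by rwa [Fintype.card_fin])
  rw [Fintype.card_fin] at hsq
  have hstep := sum_dotProduct_mulVec_self_le _ (fun j => (hsym j).one_sub_smul_sub_smul_sq _ _)
    (Nat.cast_nonneg m) _ hsq hstab
  exact inv_mul_le_of_le_mul₀ (by positivity) (Finset.sum_nonneg fun i _ => mul_self_nonneg _)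
    (sum_randTraj_le_pow_mul _ x0 (V := fun x => x ⬝ᵥ x) (Nat.cast_nonneg m) hstep t)

/-- Linear stability criterion for stochastic SAM: for the linearized dynamics
`x_{t+1} = (I − ηH_{ξ_t} − ηρH_{ξ_t}²)x_t` with i.i.d. uniform `H_{ξ_t} ∈ {H_1,…,H_m}`
(symmetric, mean `H`, moments `M_k = E[H_ξ^k]`), if the symmetric matrix
`(I − ηH − ηρH²)² + η(η−2ρ)(M₂ − H²) + 2η²ρ(M₃ − H³) + η²ρ²(M₄ − H⁴)` has largest
eigenvalue at most 1 (expressed via its quadratic form), then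
`E[‖x_t‖²] ≤ ‖x_0‖²` for all `t`. -/
theorem sam_linear_stability
    {d m : ℕ} (hm : 0 < m) (η ρ : ℝ) (hη : 0 < η) (hρ : 0 ≤ ρ)
    (Hs : Fin m → Matrix (Fin d) (Fin d) ℝ)
    (hsym : ∀ j, (Hs j).IsSymm)
    (H : Matrix (Fin d) (Fin d) ℝ)
    (hmean : H = (m : ℝ)⁻¹ • ∑ j, Hs j)
    (hstab : ∀ v : Fin d → ℝ,
      v ⬝ᵥ ((((1 : Matrix (Fin d) (Fin d) ℝ) - η • H - (η * ρ) • H ^ 2) ^ 2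
          + (η * (η - 2 * ρ)) • ((m : ℝ)⁻¹ • ∑ j, (Hs j) ^ 2 - H ^ 2)
          + (2 * η ^ 2 * ρ) • ((m : ℝ)⁻¹ • ∑ j, (Hs j) ^ 3 - H ^ 3)
          + (η ^ 2 * ρ ^ 2) • ((m : ℝ)⁻¹ • ∑ j, (Hs j) ^ 4 - H ^ 4)).mulVec v)
        ≤ v ⬝ᵥ v)
    (x0 : Fin d → ℝ) :
    ∀ t : ℕ,
      ((m : ℝ) ^ t)⁻¹ *
          ∑ ω : Fin t → Fin m,
            (randTraj (fun j x =>
                (((1 : Matrix (Fin d) (Fin d) ℝ) - η • Hs j - (η * ρ) • (Hs j) ^ 2)).mulVec x)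
              x0 t ω) ⬝ᵥ
            (randTraj (fun j x =>
                (((1 : Matrix (Fin d) (Fin d) ℝ) - η • Hs j - (η * ρ) • (Hs j) ^ 2)).mulVec x)
              x0 t ω)
        ≤ x0 ⬝ᵥ x0 :=
  sam_linear_stability_general η ρ Hs hsym H hmean hstab x0
end

section
/- Necessary condition for SAM linear stability (sharpness part): let H be symmetric PSD with a = λ_max(H), η > 0, ρ ≥ 0. If λ_max((I − ηH − ηρH²)²) ≤ 1, then 0 ≤ a(1 + ρa) ≤ 2/η. -/
open scoped BigOperators
open Matrix

/-- Necessary condition for SAM linear stability (sharpness part): if `H` is symmetric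
PSD with sharpness `a = λ_max(H)` and `λ_max((I − ηH − ηρH²)²) ≤ 1` (expressed via the
quadratic form of this symmetric PSD matrix), then `0 ≤ a(1 + ρa) ≤ 2/η`. -/
theorem sam_stability_sharpness_condition
    {d : ℕ} (hd : 0 < d) (η ρ : ℝ) (hη : 0 < η) (hρ : 0 ≤ ρ)
    (H : Matrix (Fin d) (Fin d) ℝ) (hH : H.PosSemidef)
    (hstab : ∀ v : Fin d → ℝ,
      v ⬝ᵥ ((((1 : Matrix (Fin d) (Fin d) ℝ) - η • H - (η * ρ) • H ^ 2) ^ 2).mulVec v)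
        ≤ v ⬝ᵥ v) :
    0 ≤ (⨆ i, hH.1.eigenvalues i) * (1 + ρ * (⨆ i, hH.1.eigenvalues i)) ∧
      (⨆ i, hH.1.eigenvalues i) * (1 + ρ * (⨆ i, hH.1.eigenvalues i)) ≤ 2 / η := by
  haveI : Nonempty (Fin d) := Fin.pos_iff_nonempty.mp hd
  obtain ⟨i₀, hi₀⟩ := exists_eq_ciSup_of_finite (f := hH.1.eigenvalues)
  set a : ℝ := ⨆ i, hH.1.eigenvalues i with ha
  have ha0 : 0 ≤ a := hi₀ ▸ hH.eigenvalues_nonneg i₀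
  set v : Fin d → ℝ := ⇑(hH.1.eigenvectorBasis i₀) with hv
  have hvne : v ≠ 0 := by
    have := hH.1.eigenvectorBasis.orthonormal.ne_zero i₀
    intro h
    exact this (by ext j; exact congr_fun h j)
  have hvv : 0 < v ⬝ᵥ v := by
    rcases lt_or_eq_of_le (Finset.sum_nonneg fun i _ => mul_self_nonneg (v i)) with h | h
    · exact h
    · exact absurd (dotProduct_self_eq_zero.mp h.symm) hvne
  have hHv : H.mulVec v = a • v := by
    rw [hv, hH.1.mulVec_eigenvectorBasis i₀, hi₀]
  have hH2v : (H ^ 2).mulVec v = (a ^ 2) • v := by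
    rw [pow_two, ← mulVec_mulVec, hHv, mulVec_smul, hHv, smul_smul, ← pow_two]
  set c : ℝ := 1 - η * a - η * ρ * a ^ 2 with hc
  set M : Matrix (Fin d) (Fin d) ℝ := 1 - η • H - (η * ρ) • H ^ 2 with hM
  have hMv : M.mulVec v = c • v := by
    rw [hM, sub_mulVec, sub_mulVec, one_mulVec, smul_mulVec, smul_mulVec,
      hHv, hH2v, hc]
    ext j
    simp [smul_smul]
    ring
  have hM2v : (M ^ 2).mulVec v = (c ^ 2) • v := by
    rw [pow_two, ← mulVec_mulVec, hMv, mulVec_smul, hMv, smul_smul, ← pow_two]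
  have := hstab v
  rw [hM2v, dotProduct_smul, smul_eq_mul] at this
  have hc2 : c ^ 2 ≤ 1 := by nlinarith
  constructor
  · positivity
  · rw [le_div_iff₀ hη]
    nlinarith [sq_nonneg (1 - c), hc]
end
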